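/- arXiv:2504.01674 — 5 statements merged into one kernel-verified Lean document; each statement's English description precedes it below -/
import Mathlib

section
/- Sharp vector-valued Gagliardo–Nirenberg inequality for the finitely coupled system: for every integer N ≥ 1 and every N-tuple 𝐮 = (u₁,…,u_N) of H¹ functions u_j : ℝ² → ℂ, one has ∫_{ℝ²} ( 2(∑_{j=1}^N |u_j(x)|²)² − ∑_{j=1}^N |u_j(x)|⁴ ) dx ≤ (2(2N−1)/N)·‖Q₀‖_{L²}^{−2} · (∑_{j=1}^N ∫_{ℝ²} |u_j|² dx) · (∑_{j=1}^N ∫_{ℝ²} |∇u_j|² dx). (The left-hand side equals ∑_{j=1}^N ∫ F_j(𝐮)·conj(u_j) dx, where F_j(𝐮) = 2∑_{k=1}^N |u_k|²u_j − |u_j|²u_j.) -/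
open MeasureTheory Filter

noncomputable section

/-- The plane `ℝ²`. -/
abbrev Plane : Type := EuclideanSpace ℝ (Fin 2)

/-- The `i`-th standard coordinate direction in the plane. -/
def coordDir (i : Fin 2) : Plane := EuclideanSpace.single i (1 : ℝ)

/-- Squared (Euclidean) norm of the gradient of `f` at `x`:
`|∇f(x)|² = ∑ᵢ ‖∂ᵢ f(x)‖²`. -/
def gradNormSq {E : Type*} [NormedAddCommGroup E] [NormedSpace ℝ E]
    (f : Plane → E) (x : Plane) : ℝ :=
  ∑ i : Fin 2, ‖fderiv ℝ f x (coordDir i)‖ ^ 2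

/-- `f` is of class `H¹`: continuously differentiable and `f`, `∇f` square integrable. -/
def IsH1 {E : Type*} [NormedAddCommGroup E] [NormedSpace ℝ E] (f : Plane → E) : Prop :=
  ContDiff ℝ 1 f ∧ Integrable (fun x => ‖f x‖ ^ 2) ∧ Integrable (fun x => gradNormSq f x)

/-- The Laplacian of a real-valued function on the plane. -/
def lap (f : Plane → ℝ) (x : Plane) : ℝ :=
  ∑ i : Fin 2, fderiv ℝ (fun y => fderiv ℝ f y (coordDir i)) x (coordDir i)

/-- The ground state `Q = (2N-1)^{-1/2} Q₀` of the `N`-coupled system. -/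
def groundQ (Q₀ : SchwartzMap Plane ℝ) (N : ℕ) (x : Plane) : ℝ :=
  (Real.sqrt (2 * (N : ℝ) - 1))⁻¹ * Q₀ x

/-- `e^{it}` as a complex number. -/
def mexp (t : ℝ) : ℂ := Complex.exp (Complex.I * (t : ℂ))

/-
The pointwise inequality `(∑ aⱼ)² ≤ N ∑ aⱼ²` bounds the integrand by `(2 - 1/N) (∑ |uⱼ|²)²`.
By Minkowski in `L²`, `‖∑ |uⱼ|²‖₂ ≤ ∑ ‖uⱼ‖₄²`, and the scalar Gagliardo–Nirenberg inequality gives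
`‖uⱼ‖₄⁴ ≤ 2 ‖Q₀‖₂⁻² Mⱼ Gⱼ` with `Mⱼ = ‖uⱼ‖₂²`, `Gⱼ = ‖∇uⱼ‖₂²`; Cauchy–Schwarz for finite sums then
yields `(∑ ‖uⱼ‖₄²)² ≤ 2 ‖Q₀‖₂⁻² (∑ Mⱼ)(∑ Gⱼ)`.
-/

open Finset

lemma two_mul_natCast_sub_one_div_nonneg (n : ℕ) : 0 ≤ (2 * (n : ℝ) - 1) / n := by
  rcases n.eq_zero_or_pos with rfl | hn
  · simp
  · have : (1 : ℝ) ≤ n := by exact_mod_cast hn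
    exact div_nonneg (by linarith) n.cast_nonneg

lemma two_mul_sq_sum_sub_sum_sq_le {ι : Type*} (s : Finset ι) (a : ι → ℝ) :
    2 * (∑ i ∈ s, a i) ^ 2 - ∑ i ∈ s, a i ^ 2 ≤ (2 * (#s : ℝ) - 1) / #s * (∑ i ∈ s, a i) ^ 2 := by
  rcases s.eq_empty_or_nonempty with rfl | hs
  · simp
  have hcard : (0 : ℝ) < #s := by exact_mod_cast hs.card_pos
  have := sq_sum_le_card_mul_sum_sq (s := s) (f := a)
  rw [div_mul_eq_mul_div, le_div_iff₀ hcard]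
  nlinarith

namespace MeasureTheory

variable {α : Type*} {m : MeasurableSpace α} {μ : Measure α}

lemma sq_lpNorm_two {E : Type*} [NormedAddCommGroup E] {f : α → E}
    (hf : AEStronglyMeasurable f μ) : lpNorm f 2 μ ^ 2 = ∫ x, ‖f x‖ ^ 2 ∂μ := by
  rw [lpNorm_eq_integral_norm_rpow_toReal two_ne_zero ENNReal.ofNat_ne_top hf]
  have h0 : 0 ≤ ∫ x, ‖f x‖ ^ (2 : ℝ) ∂μ := integral_nonneg fun x => by positivity
  simp only [ENNReal.toReal_ofNat, Real.rpow_two]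
  rw [← Real.rpow_natCast, ← Real.rpow_mul (by simpa using h0)]
  norm_num

lemma integral_two_mul_sq_sum_sub_sum_sq_le {ι : Type*} (s : Finset ι) {a : ι → α → ℝ}
    (ha : ∀ i ∈ s, AEStronglyMeasurable (a i) μ) (ha0 : ∀ i ∈ s, ∀ x, 0 ≤ a i x) :
    ∫ x, (2 * (∑ i ∈ s, a i x) ^ 2 - ∑ i ∈ s, a i x ^ 2) ∂μ
      ≤ (2 * (#s : ℝ) - 1) / #s * (∑ i ∈ s, lpNorm (a i) 2 μ) ^ 2 := by
  have hcoef := two_mul_natCast_sub_one_div_nonneg #s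
  by_cases hint : Integrable (fun x => 2 * (∑ i ∈ s, a i x) ^ 2 - ∑ i ∈ s, a i x ^ 2) μ
  swap
  · rw [integral_undef hint]
    exact mul_nonneg hcoef (sq_nonneg _)
  have hSm : AEStronglyMeasurable (∑ i ∈ s, a i) μ := s.aestronglyMeasurable_sum ha
  have hsq_le : ∀ x, ∑ i ∈ s, a i x ^ 2 ≤ (∑ i ∈ s, a i x) ^ 2 := fun x =>
    sum_sq_le_sq_sum_of_nonneg fun i hi => ha0 i hi x
  -- since `∑ aᵢ² ≤ (∑ aᵢ)²`, the integrand dominates `(∑ aᵢ)²`, hence each `aᵢ²`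
  have hS : Integrable (fun x => (∑ i ∈ s, a i x) ^ 2) μ := by
    refine hint.mono' ?_ (Eventually.of_forall fun x => ?_)
    · exact (s.aestronglyMeasurable_fun_sum ha).pow 2
    · rw [Real.norm_of_nonneg (sq_nonneg _)]
      linarith [hsq_le x, sq_nonneg (∑ i ∈ s, a i x)]
  have hmem : ∀ i ∈ s, MemLp (a i) 2 μ := fun i hi =>
    (memLp_two_iff_integrable_sq (ha i hi)).2 <| hS.mono' ((ha i hi).pow 2) <|
      Eventually.of_forall fun x => by
        rw [Real.norm_of_nonneg (sq_nonneg _)]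
        exact (single_le_sum (f := fun j => a j x ^ 2) (fun j _ => sq_nonneg _) hi).trans
          (hsq_le x)
  calc ∫ x, (2 * (∑ i ∈ s, a i x) ^ 2 - ∑ i ∈ s, a i x ^ 2) ∂μ
      ≤ ∫ x, (2 * (#s : ℝ) - 1) / #s * (∑ i ∈ s, a i x) ^ 2 ∂μ :=
        integral_mono hint (hS.const_mul _) fun x => two_mul_sq_sum_sub_sum_sq_le s _
    _ = (2 * (#s : ℝ) - 1) / #s * lpNorm (∑ i ∈ s, a i) 2 μ ^ 2 := by
        rw [integral_const_mul, sq_lpNorm_two hSm]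
        simp only [Finset.sum_apply, Real.norm_eq_abs, sq_abs]
    _ ≤ (2 * (#s : ℝ) - 1) / #s * (∑ i ∈ s, lpNorm (a i) 2 μ) ^ 2 := by
        gcongr
        exacts [lpNorm_nonneg, lpNorm_sum_le hmem one_le_two]

end MeasureTheory

theorem sharp_vector_gagliardo_nirenberg_finite_general
    (Q₀ : SchwartzMap Plane ℝ)
    (hGN : ∀ f : Plane → ℂ, IsH1 f →
      (∫ x, ‖f x‖ ^ 4) ≤ 2 * (∫ x, Q₀ x ^ 2)⁻¹ * (∫ x, ‖f x‖ ^ 2) * (∫ x, gradNormSq f x))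
    (N : ℕ)
    (u : Fin N → Plane → ℂ) (hu : ∀ j, IsH1 (u j)) :
    (∫ x, (2 * (∑ j, ‖u j x‖ ^ 2) ^ 2 - ∑ j, ‖u j x‖ ^ 4))
      ≤ 2 * (2 * (N : ℝ) - 1) / (N : ℝ) * (∫ x, Q₀ x ^ 2)⁻¹ *
          ((∑ j, ∫ x, ‖u j x‖ ^ 2) * (∑ j, ∫ x, gradNormSq (u j) x)) := by
  set K := (∫ x, Q₀ x ^ 2)⁻¹
  have hmeas : ∀ j, AEStronglyMeasurable (fun x => ‖u j x‖ ^ 2) :=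
    fun j => ((hu j).1.continuous.norm.pow 2).aestronglyMeasurable
  have hL4 : ∀ j, lpNorm (fun x => ‖u j x‖ ^ 2) 2 volume ^ 2
      ≤ 2 * K * (∫ x, ‖u j x‖ ^ 2) * ∫ x, gradNormSq (u j) x := fun j => by
    rw [sq_lpNorm_two (hmeas j)]
    simpa only [norm_pow, norm_norm, ← pow_mul] using hGN (u j) (hu j)
  have hsum := integral_two_mul_sq_sum_sub_sum_sq_le (μ := volume) univ
    (fun j _ => hmeas j) (fun j _ x => sq_nonneg ‖u j x‖)
  simp only [← pow_mul, card_univ, Fintype.card_fin] at hsum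
  calc _ ≤ _ := hsum
    _ ≤ (2 * (N : ℝ) - 1) / N *
          ((∑ j, 2 * K * ∫ x, ‖u j x‖ ^ 2) * ∑ j, ∫ x, gradNormSq (u j) x) := by
        gcongr
        · exact two_mul_natCast_sub_one_div_nonneg N
        · refine sum_sq_le_sum_mul_sum_of_sq_le_mul univ (fun j _ => ?_) (fun j _ => ?_)
            fun j _ => ?_
          · exact mul_nonneg (by positivity) (integral_nonneg fun x => sq_nonneg _)
          · exact integral_nonneg fun x => sum_nonneg fun i _ => sq_nonneg _
          · simpa only [mul_assoc] using hL4 j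
    _ = _ := by rw [← mul_sum]; ring

/-- Sharp vector-valued Gagliardo–Nirenberg inequality for the finitely
coupled system. -/
theorem sharp_vector_gagliardo_nirenberg_finite
    (Q₀ : SchwartzMap Plane ℝ)
    (hQpos : ∀ x, 0 < Q₀ x)
    (hQrad : ∀ x y : Plane, ‖x‖ = ‖y‖ → Q₀ x = Q₀ y)
    (hQeq : ∀ x, lap (⇑Q₀) x - Q₀ x + Q₀ x ^ 3 = 0)
    (hGN : ∀ f : Plane → ℂ, IsH1 f →
      (∫ x, ‖f x‖ ^ 4) ≤ 2 * (∫ x, Q₀ x ^ 2)⁻¹ * (∫ x, ‖f x‖ ^ 2) * (∫ x, gradNormSq f x))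
    (N : ℕ) (hN : 1 ≤ N)
    (u : Fin N → Plane → ℂ) (hu : ∀ j, IsH1 (u j)) :
    (∫ x, (2 * (∑ j, ‖u j x‖ ^ 2) ^ 2 - ∑ j, ‖u j x‖ ^ 4))
      ≤ 2 * (2 * (N : ℝ) - 1) / (N : ℝ) * (∫ x, Q₀ x ^ 2)⁻¹ *
          ((∑ j, ∫ x, ‖u j x‖ ^ 2) * (∑ j, ∫ x, gradNormSq (u j) x)) :=
  sharp_vector_gagliardo_nirenberg_finite_general Q₀ hGN N u hu
end
end

section
/- Sharp Gagliardo–Nirenberg inequality for the infinitely coupled system: let (u_j)_{j∈ℤ} be a family of H¹ functions u_j : ℝ² → ℂ with ∑_{j∈ℤ} ∫_{ℝ²}(|u_j|² + |∇u_j|²) dx < ∞. Then ∫_{ℝ²} ( 2(∑_{j∈ℤ}|u_j(x)|²)² − ∑_{j∈ℤ}|u_j(x)|⁴ ) dx ≤ 4‖Q₀‖_{L²}^{−2} · (∑_{j∈ℤ}∫_{ℝ²}|∇u_j|² dx) · (∑_{j∈ℤ}∫_{ℝ²}|u_j|² dx). -/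
/-!
Write `a j = |u j|²`. The integrand is at most `2 (∑ a j)²`, and Minkowski's inequality for
series in `L²` gives `‖∑ a j‖₂ ≤ ∑ ‖a j‖₂`. The scalar inequality reads `‖a j‖₂² ≤ C M_j K_j`
with `C = 2 ‖Q₀‖₂⁻²` and `M_j`, `K_j` the mass and kinetic energy of `u j`, so Cauchy–Schwarz
for series yields `(∑ ‖a j‖₂)² ≤ C (∑ M_j) (∑ K_j)`.
-/

open MeasureTheory Filter

noncomputable section

section NonnegSeries

variable {ι : Type*} {f g : ι → ℝ}

theorem tsum_sq_le_sq_tsum (hf : ∀ i, 0 ≤ f i) (hs : Summable f) :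
    ∑' i, f i ^ 2 ≤ (∑' i, f i) ^ 2 :=
  Real.tsum_le_of_sum_le (fun i => sq_nonneg (f i)) fun s =>
    (Finset.sum_sq_le_sq_sum_of_nonneg fun i _ => hf i).trans <|
      pow_le_pow_left₀ (Finset.sum_nonneg fun i _ => hf i) (hs.sum_le_tsum s fun i _ => hf i) 2

theorem sq_le_two_mul_sq_tsum_sub_tsum_sq (hf : ∀ i, 0 ≤ f i) (hs : Summable f) (i : ι) :
    f i ^ 2 ≤ 2 * (∑' j, f j) ^ 2 - ∑' j, f j ^ 2 := by
  have hi : f i ≤ ∑' j, f j := hs.le_tsum i fun j _ => hf j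
  nlinarith [tsum_sq_le_sq_tsum hf hs, hf i]

theorem summable_sqrt_mul_sqrt_and_tsum_le (hf : ∀ i, 0 ≤ f i) (hg : ∀ i, 0 ≤ g i)
    (hfs : Summable f) (hgs : Summable g) :
    Summable (fun i => √(f i) * √(g i)) ∧
      ∑' i, √(f i) * √(g i) ≤ √(∑' i, f i) * √(∑' i, g i) := by
  have hnonneg : 0 ≤ fun i => √(f i) * √(g i) := fun i => by positivity
  have hfin (s : Finset ι) : ∑ i ∈ s, √(f i) * √(g i) ≤ √(∑' i, f i) * √(∑' i, g i) :=
    (Real.sum_sqrt_mul_sqrt_le s hf hg).trans <| by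
      gcongr
      · exact hfs.sum_le_tsum s fun i _ => hf i
      · exact hgs.sum_le_tsum s fun i _ => hg i
  exact ⟨summable_of_sum_le hnonneg hfin, Real.tsum_le_of_sum_le hnonneg hfin⟩

end NonnegSeries

section Integration

variable {α : Type*} [MeasurableSpace α] {μ : Measure α} {ι : Type*} [Countable ι]

theorem ae_summable_norm_of_summable_integral_norm {E : Type*} [NormedAddCommGroup E]
    {f : ι → α → E} (hf : ∀ i, Integrable (f i) μ)
    (hs : Summable fun i => ∫ x, ‖f i x‖ ∂μ) : ∀ᵐ x ∂μ, Summable fun i => ‖f i x‖ := by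
  refine summable_norm_of_tsum_eLpNorm_ne_top le_rfl (fun i => (hf i).1) ?_
  simp_rw [eLpNorm_one_eq_lintegral_enorm, ← ofReal_integral_norm_eq_lintegral_enorm (hf _),
    ← ENNReal.ofReal_tsum_of_nonneg (fun i => integral_nonneg fun x => norm_nonneg (f i x)) hs]
  exact ENNReal.ofReal_ne_top

theorem MeasureTheory.L2.integral_sq_eq_norm_sq (F : α →₂[μ] ℝ) : ∫ x, F x ^ 2 ∂μ = ‖F‖ ^ 2 := by
  rw [← real_inner_self_eq_norm_sq, L2.inner_def]
  simp [sq]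

theorem integrable_sq_tsum_and_integral_sq_tsum_le {f : ι → α → ℝ} (hf : ∀ i, MemLp (f i) 2 μ)
    (hs : Summable fun i => √(∫ x, f i x ^ 2 ∂μ)) :
    Integrable (fun x => (∑' i, f i x) ^ 2) μ ∧
      ∫ x, (∑' i, f i x) ^ 2 ∂μ ≤ (∑' i, √(∫ x, f i x ^ 2 ∂μ)) ^ 2 := by
  set F : ι → α →₂[μ] ℝ := fun i => (hf i).toLp
  have hnorm (i : ι) : ‖F i‖ = √(∫ x, f i x ^ 2 ∂μ) := by
    rw [← Real.sqrt_sq (norm_nonneg (F i)), ← L2.integral_sq_eq_norm_sq]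
    congr 1
    exact integral_congr_ae <| (hf i).coeFn_toLp.mono fun x hx => by simp only [F, hx]
  have hFs : Summable fun i => ‖F i‖ := by simpa only [hnorm] using hs
  have hae : ∀ᵐ x ∂μ, ∑' i, f i x = (∑' i, F i) x := by
    filter_upwards [Lp.hasSum_coeFn_tsum (tsum_enorm_ne_top_iff_summable_norm.2 hFs),
      ae_all_iff.2 fun i => (hf i).coeFn_toLp] with x hsum hF
    exact (funext hF ▸ hsum).tsum_eq
  have hsq : (fun x => (∑' i, f i x) ^ 2) =ᵐ[μ] fun x => (∑' i, F i) x ^ 2 :=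
    hae.mono fun x hx => congrArg (· ^ 2) hx
  refine ⟨(Lp.memLp _).integrable_sq.congr hsq.symm, ?_⟩
  rw [integral_congr_ae hsq, L2.integral_sq_eq_norm_sq, ← tsum_congr hnorm]
  gcongr
  exact norm_tsum_le_tsum_norm hFs

theorem integral_two_mul_sq_tsum_sub_tsum_sq_le {a : ι → α → ℝ} {K : ι → ℝ} {C : ℝ}
    (ha₀ : ∀ i x, 0 ≤ a i x) (ha : ∀ i, Integrable (a i) μ)
    (hM : Summable fun i => ∫ x, a i x ∂μ) (hK₀ : ∀ i, 0 ≤ K i) (hK : Summable K) (hC : 0 ≤ C)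
    (hGN : ∀ i, ∫ x, a i x ^ 2 ∂μ ≤ C * (∫ x, a i x ∂μ) * K i) :
    ∫ x, (2 * (∑' i, a i x) ^ 2 - ∑' i, a i x ^ 2) ∂μ ≤
      2 * C * (∑' i, ∫ x, a i x ∂μ) * ∑' i, K i := by
  have hM₀ (i : ι) : 0 ≤ ∫ x, a i x ∂μ := integral_nonneg (ha₀ i)
  have hM_tsum₀ : 0 ≤ ∑' i, ∫ x, a i x ∂μ := tsum_nonneg hM₀
  have hK_tsum₀ : 0 ≤ ∑' i, K i := tsum_nonneg hK₀
  by_cases hg : Integrable (fun x => 2 * (∑' i, a i x) ^ 2 - ∑' i, a i x ^ 2) μ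
  swap
  · rw [integral_undef hg]
    positivity
  have hae : ∀ᵐ x ∂μ, Summable fun i => a i x := by
    have hnorm (i : ι) (x : α) : ‖a i x‖ = a i x := Real.norm_of_nonneg (ha₀ i x)
    simpa only [hnorm] using ae_summable_norm_of_summable_integral_norm ha (by simpa only [hnorm])
  -- `a i ^ 2` is integrable only because the (integrable) integrand dominates it
  have hL2 (i : ι) : MemLp (a i) 2 μ := by
    refine (memLp_two_iff_integrable_sq (ha i).1).2 <| hg.mono' ((ha i).1.pow 2) ?_
    filter_upwards [hae] with x hx
    rw [Real.norm_of_nonneg (sq_nonneg _)]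
    exact sq_le_two_mul_sq_tsum_sub_tsum_sq (ha₀ · x) hx i
  have hb (i : ι) : √(∫ x, a i x ^ 2 ∂μ) ≤ √(C * ∫ x, a i x ∂μ) * √(K i) := by
    rw [← Real.sqrt_mul (mul_nonneg hC (hM₀ i))]
    exact Real.sqrt_le_sqrt (hGN i)
  obtain ⟨hCS_summable, hCS⟩ :=
    summable_sqrt_mul_sqrt_and_tsum_le (fun i => mul_nonneg hC (hM₀ i)) hK₀ (hM.mul_left C) hK
  have hb_summable := hCS_summable.of_nonneg_of_le (fun i => Real.sqrt_nonneg _) hb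
  obtain ⟨hS_int, hS⟩ := integrable_sq_tsum_and_integral_sq_tsum_le hL2 hb_summable
  calc ∫ x, (2 * (∑' i, a i x) ^ 2 - ∑' i, a i x ^ 2) ∂μ
      ≤ ∫ x, 2 * (∑' i, a i x) ^ 2 ∂μ :=
        integral_mono hg (hS_int.const_mul 2) fun x =>
          sub_le_self _ (tsum_nonneg fun i => sq_nonneg _)
    _ = 2 * ∫ x, (∑' i, a i x) ^ 2 ∂μ := integral_const_mul 2 _
    _ ≤ 2 * (√(C * ∑' i, ∫ x, a i x ∂μ) * √(∑' i, K i)) ^ 2 := by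
        rw [← tsum_mul_left]
        gcongr
        exact hS.trans (pow_le_pow_left₀ (tsum_nonneg fun i => Real.sqrt_nonneg _)
          ((hb_summable.tsum_le_tsum hb hCS_summable).trans hCS) 2)
    _ = 2 * C * (∑' i, ∫ x, a i x ∂μ) * ∑' i, K i := by
        rw [mul_pow, Real.sq_sqrt (mul_nonneg hC hM_tsum₀), Real.sq_sqrt hK_tsum₀]
        ring

end Integration

theorem sharp_gagliardo_nirenberg_infinite_general
    (Q₀ : SchwartzMap Plane ℝ)
    (hGN : ∀ f : Plane → ℂ, IsH1 f →
      (∫ x, ‖f x‖ ^ 4) ≤ 2 * (∫ x, Q₀ x ^ 2)⁻¹ * (∫ x, ‖f x‖ ^ 2) * (∫ x, gradNormSq f x))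
    (u : ℤ → Plane → ℂ) (hu : ∀ j, IsH1 (u j))
    (hsum : Summable (fun j : ℤ => ∫ x, (‖u j x‖ ^ 2 + gradNormSq (u j) x))) :
    (∫ x, (2 * (∑' j : ℤ, ‖u j x‖ ^ 2) ^ 2 - ∑' j : ℤ, ‖u j x‖ ^ 4))
      ≤ 4 * (∫ x, Q₀ x ^ 2)⁻¹ * (∑' j : ℤ, ∫ x, gradNormSq (u j) x) *
          (∑' j : ℤ, ∫ x, ‖u j x‖ ^ 2) := by
  have hM₀ (j : ℤ) : 0 ≤ ∫ x, ‖u j x‖ ^ 2 := integral_nonneg fun x => sq_nonneg _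
  have hK₀ (j : ℤ) : 0 ≤ ∫ x, gradNormSq (u j) x :=
    integral_nonneg fun x => Finset.sum_nonneg fun i _ => sq_nonneg _
  have hMK : Summable fun j => (∫ x, ‖u j x‖ ^ 2) + ∫ x, gradNormSq (u j) x :=
    hsum.congr fun j => integral_add (hu j).2.1 (hu j).2.2
  have key := integral_two_mul_sq_tsum_sub_tsum_sq_le (a := fun j x => ‖u j x‖ ^ 2)
    (C := 2 * (∫ x, Q₀ x ^ 2)⁻¹) (fun j x => sq_nonneg _) (fun j => (hu j).2.1)
    (hMK.of_nonneg_of_le hM₀ fun j => le_add_of_nonneg_right (hK₀ j)) hK₀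
    (hMK.of_nonneg_of_le hK₀ fun j => le_add_of_nonneg_left (hM₀ j))
    (by positivity) fun j => by simpa only [← pow_mul] using hGN (u j) (hu j)
  convert key using 1
  · simp only [← pow_mul]
  · ring

/-- Sharp Gagliardo–Nirenberg inequality for the infinitely coupled system. -/
theorem sharp_gagliardo_nirenberg_infinite
    (Q₀ : SchwartzMap Plane ℝ)
    (hQpos : ∀ x, 0 < Q₀ x)
    (hQrad : ∀ x y : Plane, ‖x‖ = ‖y‖ → Q₀ x = Q₀ y)
    (hQeq : ∀ x, lap (⇑Q₀) x - Q₀ x + Q₀ x ^ 3 = 0)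
    (hGN : ∀ f : Plane → ℂ, IsH1 f →
      (∫ x, ‖f x‖ ^ 4) ≤ 2 * (∫ x, Q₀ x ^ 2)⁻¹ * (∫ x, ‖f x‖ ^ 2) * (∫ x, gradNormSq f x))
    (u : ℤ → Plane → ℂ) (hu : ∀ j, IsH1 (u j))
    (hsum : Summable (fun j : ℤ => ∫ x, (‖u j x‖ ^ 2 + gradNormSq (u j) x))) :
    (∫ x, (2 * (∑' j : ℤ, ‖u j x‖ ^ 2) ^ 2 - ∑' j : ℤ, ‖u j x‖ ^ 4))
      ≤ 4 * (∫ x, Q₀ x ^ 2)⁻¹ * (∑' j : ℤ, ∫ x, gradNormSq (u j) x) *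
          (∑' j : ℤ, ∫ x, ‖u j x‖ ^ 2) :=
  sharp_gagliardo_nirenberg_infinite_general Q₀ hGN u hu hsum
end
end

section
/- Null space of the linearized operator L₊ for the N-coupled system (Lemma 3.4): let N ≥ 2 and assume (i) every twice continuously differentiable real function r on ℝ² with r and ∇r square-integrable solving Δr − r + 3Q₀²r = 0 is a linear combination of ∂_{x₁}Q₀ and ∂_{x₂}Q₀, and (ii) ∫_{ℝ²}(|∇h|² + h² − Q₀²h²) dx ≥ 0 for every real H¹ function h. Let r₁,…,r_N be twice continuously differentiable real functions with r_j and ∇r_j square-integrable satisfying, for every j ∈ {1,…,N}, Δr_j − r_j + (2N+1)Q²r_j + 4Q²∑_{k≠j} r_k = 0 on ℝ². Then r₁ = r₂ = ⋯ = r_N, and there exist constants c₁, c₂ ∈ ℝ such that r_j = c₁∂_{x₁}Q₀ + c₂∂_{x₂}Q₀ for every j. -/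
open MeasureTheory Filter

noncomputable section

/-!
Subtracting two equations of the system cancels the coupling sum: `d = r j - r k` solves
`Δd - d + c Q₀² d = 0` with `c = (2N - 3)/(2N - 1) < 1`. Testing this equation against `d`
(through cutoffs `χₙ(x) = ψ(x/(n+1))`, whose gradients are `O(1/n)`) gives
`∫ |∇d|² + d² - c Q₀² d² = 0`; together with the nonnegativity of `L₋` this forces
`(1 - c) ∫ Q₀² d² ≤ 0`, hence `d = 0`. Once all `r j` coincide, the system collapses to
`Δr - r + 3 Q₀² r = 0`, whose finite-energy solutions are the translation modes by hypothesis.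
-/

open Topology
open scoped ContDiff

section Calculus

variable {E : Type*} [NormedAddCommGroup E] [NormedSpace ℝ E]

theorem fderiv_mul_mul_fderiv_apply {χ u : E → ℝ} {x v : E} (hχ : DifferentiableAt ℝ χ x)
    (hu : DifferentiableAt ℝ u x) (hu' : DifferentiableAt ℝ (fun y => fderiv ℝ u y v) x) :
    fderiv ℝ (fun y => χ y * u y * fderiv ℝ u y v) x v =
      fderiv ℝ χ x v * u x * fderiv ℝ u x v +
        χ x * (u x * fderiv ℝ (fun y => fderiv ℝ u y v) x v + fderiv ℝ u x v ^ 2) := by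
  rw [fderiv_fun_mul (hχ.fun_mul hu) hu', fderiv_fun_mul hχ hu]
  simp only [add_apply, smul_apply, smul_eq_mul]
  ring

variable [FiniteDimensional ℝ E]

theorem exists_cutoff_seq : ∃ (χ : ℕ → E → ℝ) (M : ℝ),
    (∀ n, ContDiff ℝ ∞ (χ n)) ∧ (∀ n, HasCompactSupport (χ n)) ∧ (∀ n x, |χ n x| ≤ 1) ∧
    (∀ x, ∀ᶠ n in atTop, χ n x = 1) ∧ (∀ n x, ‖fderiv ℝ (χ n) x‖ ≤ M / (n + 1)) := by
  let ψ : ContDiffBump (0 : E) := ⟨1, 2, one_pos, one_lt_two⟩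
  obtain ⟨M, hM⟩ := (ψ.hasCompactSupport.fderiv (𝕜 := ℝ)).exists_bound_of_continuous
    ((ψ.contDiff (n := 1)).continuous_fderiv one_ne_zero)
  have hpos : ∀ n : ℕ, (0 : ℝ) < n + 1 := fun n => by positivity
  let L : ℕ → E →L[ℝ] E := fun n => ((n : ℝ) + 1)⁻¹ • ContinuousLinearMap.id ℝ E
  have hL : ∀ n x, ‖L n x‖ = ‖x‖ / (n + 1) := fun n x => by
    simp [L, norm_smul, div_eq_inv_mul, abs_of_pos (hpos n)]
  refine ⟨fun n => ψ ∘ L n, M, fun n => ψ.contDiff.comp (L n).contDiff, fun n => ?_,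
    fun n x => abs_le.2 ⟨(neg_nonpos.2 zero_le_one).trans ψ.nonneg, ψ.le_one⟩, fun x => ?_,
    fun n x => ?_⟩
  · refine HasCompactSupport.intro (isCompact_closedBall 0 (2 * (n + 1))) fun x hx => ?_
    apply ψ.zero_of_le_dist
    rw [Metric.mem_closedBall, dist_zero_right, not_le, ← lt_div_iff₀ (hpos n)] at hx
    simpa [hL, ψ] using hx.le
  · filter_upwards [eventually_ge_atTop ⌈‖x‖⌉₊] with n hn
    apply ψ.one_of_mem_closedBall
    rw [Metric.mem_closedBall, dist_zero_right, hL, div_le_one (hpos n)]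
    have hxn : ‖x‖ ≤ n := Nat.ceil_le.1 hn
    show ‖x‖ ≤ n + 1
    linarith
  · have hψ : DifferentiableAt ℝ ψ (L n x) := (ψ.contDiff (n := 1)).differentiable one_ne_zero _
    rw [fderiv_comp x hψ (L n).differentiableAt, (L n).fderiv]
    refine ContinuousLinearMap.opNorm_le_bound _ (div_nonneg ((norm_nonneg _).trans (hM 0))
      (hpos n).le) fun y => ?_
    calc ‖fderiv ℝ ψ (L n x) (L n y)‖ ≤ ‖fderiv ℝ ψ (L n x)‖ * ‖L n y‖ :=
          ContinuousLinearMap.le_opNorm _ _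
      _ ≤ M * (‖y‖ / (n + 1)) := by rw [hL]; gcongr; exact hM _
      _ = M / (n + 1) * ‖y‖ := by ring

variable [MeasurableSpace E] [BorelSpace E] {μ : Measure E} [μ.IsAddHaarMeasure]

theorem integral_fderiv_apply_eq_zero {F : E → ℝ} (hF : ContDiff ℝ 1 F) (hFs : HasCompactSupport F)
    (v : E) : ∫ x, fderiv ℝ F x v ∂μ = 0 := by
  have hF'i : Integrable (fun x => fderiv ℝ F x v) μ :=
    ((hF.continuous_fderiv one_ne_zero).clm_apply continuous_const).integrable_of_hasCompactSupport
      (hFs.fderiv_apply ℝ v)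
  have hFi : Integrable F μ := hF.continuous.integrable_of_hasCompactSupport hFs
  simpa using integral_mul_fderiv_eq_neg_fderiv_mul_of_integrable (μ := μ)
    (f := fun _ => (1 : ℝ)) (by simp) (by simpa using hF'i) (by simpa using hFi)
    (fun _ _ => differentiableAt_const _) (fun x _ => hF.differentiable one_ne_zero x)

end Calculus

theorem tendsto_integral_cutoff_mul {α : Type*} [MeasurableSpace α] {μ : Measure α}
    {χ : ℕ → α → ℝ} (hχm : ∀ n, AEStronglyMeasurable (χ n) μ) (hχ : ∀ n x, |χ n x| ≤ 1)
    (hχ1 : ∀ x, ∀ᶠ n in atTop, χ n x = 1) {G : α → ℝ} (hG : Integrable G μ) :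
    Tendsto (fun n => ∫ x, χ n x * G x ∂μ) atTop (𝓝 (∫ x, G x ∂μ)) := by
  refine tendsto_integral_of_dominated_convergence (fun x => ‖G x‖)
    (fun n => (hχm n).mul hG.aestronglyMeasurable) hG.norm (fun n => ae_of_all _ fun x => ?_)
    (ae_of_all _ fun x => tendsto_const_nhds.congr' ?_)
  · rw [norm_mul, Real.norm_eq_abs]
    exact mul_le_of_le_one_left (norm_nonneg _) (hχ n x)
  · filter_upwards [hχ1 x] with n hn
    rw [hn, one_mul]

theorem integrable_sq_sub {α : Type*} [MeasurableSpace α] {μ : Measure α} {f g : α → ℝ}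
    (hf : AEStronglyMeasurable f μ) (hg : AEStronglyMeasurable g μ)
    (hfi : Integrable (fun x => f x ^ 2) μ) (hgi : Integrable (fun x => g x ^ 2) μ) :
    Integrable (fun x => (f - g) x ^ 2) μ :=
  (memLp_two_iff_integrable_sq (hf.sub hg)).1
    (((memLp_two_iff_integrable_sq hf).2 hfi).sub ((memLp_two_iff_integrable_sq hg).2 hgi))

theorem norm_coordDir (i : Fin 2) : ‖coordDir i‖ = 1 := by
  simp [coordDir]

theorem gradNormSq_nonneg {E : Type*} [NormedAddCommGroup E] [NormedSpace ℝ E] (f : Plane → E)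
    (x : Plane) : 0 ≤ gradNormSq f x :=
  Finset.sum_nonneg fun _ _ => by positivity

theorem gradNormSq_eq_sum_sq (u : Plane → ℝ) (x : Plane) :
    gradNormSq u x = ∑ i, fderiv ℝ u x (coordDir i) ^ 2 := by
  simp [gradNormSq, Real.norm_eq_abs, sq_abs]

theorem continuous_fderiv_apply_coordDir {u : Plane → ℝ} (hu : ContDiff ℝ 1 u) (i : Fin 2) :
    Continuous fun x => fderiv ℝ u x (coordDir i) :=
  (hu.continuous_fderiv one_ne_zero).clm_apply continuous_const

theorem contDiff_fderiv_apply_coordDir {u : Plane → ℝ} (hu : ContDiff ℝ 2 u) (i : Fin 2) :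
    ContDiff ℝ 1 fun x => fderiv ℝ u x (coordDir i) :=
  (hu.fderiv_right (m := 1) le_rfl).clm_apply contDiff_const

theorem continuous_gradNormSq {u : Plane → ℝ} (hu : ContDiff ℝ 1 u) : Continuous (gradNormSq u) :=
  continuous_finsetSum _ fun i _ => (continuous_fderiv_apply_coordDir hu i).norm.pow 2

theorem integral_cutoff_mul_energy {χ u : Plane → ℝ} (hχ : ContDiff ℝ 1 χ)
    (hχs : HasCompactSupport χ) (hu : ContDiff ℝ 2 u) :
    ∫ x, (χ x * (u x * lap u x + gradNormSq u x) +
      u x * ∑ i, fderiv ℝ χ x (coordDir i) * fderiv ℝ u x (coordDir i)) = 0 := by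
  let F : Fin 2 → Plane → ℝ := fun i y => χ y * u y * fderiv ℝ u y (coordDir i)
  have hF : ∀ i, ContDiff ℝ 1 (F i) := fun i =>
    (hχ.mul (hu.of_le one_le_two)).mul (contDiff_fderiv_apply_coordDir hu i)
  have hFs : ∀ i, HasCompactSupport (F i) := fun i => hχs.mul_right.mul_right
  have hF'i : ∀ i, Integrable fun x => fderiv ℝ (F i) x (coordDir i) := fun i =>
    (continuous_fderiv_apply_coordDir (hF i) i).integrable_of_hasCompactSupport
      ((hFs i).fderiv_apply ℝ _)
  have hpointwise : ∀ x, ∑ i, fderiv ℝ (F i) x (coordDir i) =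
      χ x * (u x * lap u x + gradNormSq u x) +
        u x * ∑ i, fderiv ℝ χ x (coordDir i) * fderiv ℝ u x (coordDir i) := fun x => by
    simp only [F]
    rw [Finset.sum_congr rfl fun i _ => fderiv_mul_mul_fderiv_apply
      (hχ.differentiable one_ne_zero x) (hu.differentiable two_ne_zero x)
      ((contDiff_fderiv_apply_coordDir hu i).differentiable one_ne_zero x)]
    simp only [lap, gradNormSq_eq_sum_sq, Fin.sum_univ_two]
    ring
  simp_rw [← hpointwise]
  rw [integral_finsetSum _ fun i _ => hF'i i]
  exact Finset.sum_eq_zero fun i _ => integral_fderiv_apply_eq_zero (hF i) (hFs i) _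

theorem abs_mul_sum_fderiv_le (χ u : Plane → ℝ) (x : Plane) :
    |u x * ∑ i, fderiv ℝ χ x (coordDir i) * fderiv ℝ u x (coordDir i)| ≤
      ‖fderiv ℝ χ x‖ * (u x ^ 2 + gradNormSq u x) := by
  have hχ' : ∀ i, |fderiv ℝ χ x (coordDir i)| ≤ ‖fderiv ℝ χ x‖ := fun i => by
    simpa [norm_coordDir] using (fderiv ℝ χ x).le_opNorm (coordDir i)
  set K := ‖fderiv ℝ χ x‖
  rw [gradNormSq_eq_sum_sq, Fin.sum_univ_two, Fin.sum_univ_two, abs_mul]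
  set a₀ := fderiv ℝ χ x (coordDir 0)
  set a₁ := fderiv ℝ χ x (coordDir 1)
  set b₀ := fderiv ℝ u x (coordDir 0)
  set b₁ := fderiv ℝ u x (coordDir 1)
  calc |u x| * |a₀ * b₀ + a₁ * b₁| ≤ |u x| * (|a₀| * |b₀| + |a₁| * |b₁|) := by
        gcongr; exact (abs_add_le _ _).trans_eq (by rw [abs_mul, abs_mul])
    _ ≤ |u x| * (K * |b₀| + K * |b₁|) := by gcongr <;> exact hχ' _
    _ ≤ K * (u x ^ 2 + (b₀ ^ 2 + b₁ ^ 2)) := by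
        have hK : 0 ≤ K := norm_nonneg _
        nlinarith [sq_nonneg (|u x| - |b₀|), sq_nonneg (|u x| - |b₁|), sq_abs (u x), sq_abs b₀,
          sq_abs b₁, mul_nonneg hK (sq_nonneg (|u x| - |b₀|)),
          mul_nonneg hK (sq_nonneg (|u x| - |b₁|)), mul_nonneg hK (sq_nonneg (u x))]

theorem integral_mul_lap_add_gradNormSq_eq_zero {u : Plane → ℝ} (hu : ContDiff ℝ 2 u)
    (hui : Integrable fun x => u x ^ 2) (hugi : Integrable (gradNormSq u))
    (hlap : Integrable fun x => u x * lap u x) :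
    ∫ x, (u x * lap u x + gradNormSq u x) = 0 := by
  obtain ⟨χ, M, hχ, hχs, hχ_le, hχ_one, hχ'⟩ := exists_cutoff_seq (E := Plane)
  let G : Plane → ℝ := fun x => u x * lap u x + gradNormSq u x
  let R : ℕ → Plane → ℝ := fun n x =>
    u x * ∑ i, fderiv ℝ (χ n) x (coordDir i) * fderiv ℝ u x (coordDir i)
  have hG : Integrable G := hlap.add hugi
  have hR_le : ∀ n x, ‖R n x‖ ≤ M / (n + 1) * (u x ^ 2 + gradNormSq u x) := fun n x =>
    (abs_mul_sum_fderiv_le (χ n) u x).trans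
      (mul_le_mul_of_nonneg_right (hχ' n x) (add_nonneg (sq_nonneg _) (gradNormSq_nonneg _ _)))
  have hR : ∀ n, Integrable (R n) := fun n =>
    ((hui.add hugi).const_mul (M / (n + 1))).mono' (hu.continuous.mul (continuous_finsetSum _
      fun i _ => (continuous_fderiv_apply_coordDir ((hχ n).of_le (by simp)) i).mul
        (continuous_fderiv_apply_coordDir (hu.of_le one_le_two) i))).aestronglyMeasurable
      (ae_of_all _ (hR_le n))
  have hcutoff : ∀ n, ∫ x, χ n x * G x = -∫ x, R n x := fun n => by
    have hχG : Integrable fun x => χ n x * G x :=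
      hG.bdd_mul (c := 1) (hχ n).continuous.aestronglyMeasurable (ae_of_all _ (hχ_le n))
    rw [eq_neg_iff_add_eq_zero, ← integral_add hχG (hR n)]
    exact integral_cutoff_mul_energy ((hχ n).of_le (by simp)) (hχs n) hu
  have hbound : ∀ n : ℕ, ‖∫ x, χ n x * G x‖ ≤ M / (n + 1) * ∫ x, (u x ^ 2 + gradNormSq u x) :=
    fun n => by
    rw [hcutoff, norm_neg, ← integral_const_mul]
    exact norm_integral_le_of_norm_le ((hui.add hugi).const_mul _) (ae_of_all _ (hR_le n))
  have hbound_lim : Tendsto (fun n : ℕ => M / (n + 1) * ∫ x, (u x ^ 2 + gradNormSq u x))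
      atTop (𝓝 0) := by
    simpa [div_eq_mul_inv] using ((tendsto_one_div_add_atTop_nhds_zero_nat.const_mul M).mul_const
      (∫ x, (u x ^ 2 + gradNormSq u x)))
  exact tendsto_nhds_unique
    (tendsto_integral_cutoff_mul (fun n => (hχ n).continuous.aestronglyMeasurable) hχ_le hχ_one hG)
    (squeeze_zero_norm hbound hbound_lim)

theorem fderiv_sub_apply_coordDir {f g : Plane → ℝ} (hf : Differentiable ℝ f)
    (hg : Differentiable ℝ g) (x : Plane) (i : Fin 2) :
    fderiv ℝ (f - g) x (coordDir i) = fderiv ℝ f x (coordDir i) - fderiv ℝ g x (coordDir i) := by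
  rw [fderiv_sub (hf x) (hg x), sub_apply]

theorem lap_sub {f g : Plane → ℝ} (hf : ContDiff ℝ 2 f) (hg : ContDiff ℝ 2 g) (x : Plane) :
    lap (f - g) x = lap f x - lap g x := by
  simp only [lap, ← Finset.sum_sub_distrib]
  refine Finset.sum_congr rfl fun i _ => ?_
  have hfg : (fun y => fderiv ℝ (f - g) y (coordDir i)) =
      (fun y => fderiv ℝ f y (coordDir i)) - fun y => fderiv ℝ g y (coordDir i) :=
    funext fun y => fderiv_sub_apply_coordDir (hf.differentiable two_ne_zero)
      (hg.differentiable two_ne_zero) y i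
  rw [hfg, fderiv_sub ((contDiff_fderiv_apply_coordDir hf i).differentiable one_ne_zero x)
    ((contDiff_fderiv_apply_coordDir hg i).differentiable one_ne_zero x),
    sub_apply]

theorem integrable_gradNormSq_sub {f g : Plane → ℝ} (hf : ContDiff ℝ 1 f) (hg : ContDiff ℝ 1 g)
    (hfi : Integrable (gradNormSq f)) (hgi : Integrable (gradNormSq g)) :
    Integrable (gradNormSq (f - g)) := by
  refine ((hfi.add hgi).const_mul 2).mono' (continuous_gradNormSq (hf.sub hg)).aestronglyMeasurable
    (ae_of_all _ fun x => ?_)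
  rw [Real.norm_eq_abs, abs_of_nonneg (gradNormSq_nonneg _ _)]
  simp only [Pi.add_apply, gradNormSq_eq_sum_sq, Fin.sum_univ_two, fderiv_sub_apply_coordDir
    (hf.differentiable one_ne_zero) (hg.differentiable one_ne_zero)]
  nlinarith [sq_nonneg (fderiv ℝ f x (coordDir 0) + fderiv ℝ g x (coordDir 0)),
    sq_nonneg (fderiv ℝ f x (coordDir 1) + fderiv ℝ g x (coordDir 1))]

theorem eq_zero_of_lap_sub_add_mul_sq_eq_zero {Q : Plane → ℝ} (hQc : Continuous Q) {C : ℝ}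
    (hQb : ∀ x, |Q x| ≤ C) (hQ : ∀ x, Q x ≠ 0)
    (hL : ∀ h : Plane → ℝ, IsH1 h → 0 ≤ ∫ x, (gradNormSq h x + h x ^ 2 - Q x ^ 2 * h x ^ 2))
    {c : ℝ} (hc : c < 1) {d : Plane → ℝ} (hd : ContDiff ℝ 2 d) (hdi : Integrable fun x => d x ^ 2)
    (hdgi : Integrable (gradNormSq d)) (hpde : ∀ x, lap d x - d x + c * Q x ^ 2 * d x = 0) :
    d = 0 := by
  have hQd : Integrable fun x => Q x ^ 2 * d x ^ 2 :=
    hdi.bdd_mul (c := C ^ 2) (hQc.pow 2).aestronglyMeasurable (ae_of_all _ fun x => by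
      rw [Real.norm_eq_abs, abs_pow]; exact pow_le_pow_left₀ (abs_nonneg _) (hQb x) 2)
  have hlap : ∀ x, d x * lap d x = d x ^ 2 - c * (Q x ^ 2 * d x ^ 2) := fun x => by
    linear_combination d x * hpde x
  have hdlap : Integrable fun x => d x * lap d x := by
    simp_rw [hlap]; exact hdi.sub (hQd.const_mul c)
  have henergy : ∫ x, (d x ^ 2 - c * (Q x ^ 2 * d x ^ 2) + gradNormSq d x) = 0 := by
    simpa only [hlap] using integral_mul_lap_add_gradNormSq_eq_zero hd hdi hdgi hdlap
  have hEi : Integrable fun x => d x ^ 2 - c * (Q x ^ 2 * d x ^ 2) + gradNormSq d x :=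
    (hdi.sub (hQd.const_mul c)).add hdgi
  have hLi : Integrable fun x => gradNormSq d x + d x ^ 2 - Q x ^ 2 * d x ^ 2 :=
    (hdgi.add hdi).sub hQd
  have hH1 : IsH1 d := ⟨hd.of_le one_le_two, by simpa [Real.norm_eq_abs, sq_abs] using hdi, hdgi⟩
  have hweighted : (1 - c) * ∫ x, Q x ^ 2 * d x ^ 2 ≤ (1 - c) * 0 := by
    calc (1 - c) * ∫ x, Q x ^ 2 * d x ^ 2
        = (∫ x, (d x ^ 2 - c * (Q x ^ 2 * d x ^ 2) + gradNormSq d x)) -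
            ∫ x, (gradNormSq d x + d x ^ 2 - Q x ^ 2 * d x ^ 2) := by
          rw [← integral_const_mul, ← integral_sub hEi hLi]
          congr 1 with x
          ring
      _ ≤ (1 - c) * 0 := by linarith [hL d hH1]
  have hzero : ∫ x, Q x ^ 2 * d x ^ 2 = 0 :=
    le_antisymm (le_of_mul_le_mul_left hweighted (sub_pos.2 hc))
      (integral_nonneg fun x => by positivity)
  have hQd0 : (fun x => Q x ^ 2 * d x ^ 2) = 0 :=
    (Continuous.ae_eq_iff_eq volume ((hQc.pow 2).mul (hd.continuous.pow 2)) continuous_const).1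
      ((integral_eq_zero_iff_of_nonneg (fun x => by positivity) hQd).1 hzero)
  funext x
  simpa [hQ x] using congrFun hQd0 x

theorem groundQ_sq (Q₀ : SchwartzMap Plane ℝ) {N : ℕ} (hN : 1 ≤ N) (x : Plane) :
    groundQ Q₀ N x ^ 2 = Q₀ x ^ 2 / (2 * N - 1) := by
  have : (0 : ℝ) ≤ 2 * N - 1 := by
    have : (1 : ℝ) ≤ N := by exact_mod_cast hN
    linarith
  rw [groundQ, mul_pow, inv_pow, Real.sq_sqrt this, inv_mul_eq_div]

theorem sum_filter_ne_eq_sub {ι : Type*} [Fintype ι] [DecidableEq ι] (f : ι → ℝ) (j : ι) :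
    ∑ k ∈ Finset.univ.filter (fun k => k ≠ j), f k = ∑ k, f k - f j := by
  rw [Finset.filter_ne', Finset.sum_erase_eq_sub (Finset.mem_univ j)]

theorem Lplus_kernel_general
    (Q₀ : SchwartzMap Plane ℝ)
    (hQpos : ∀ x, 0 < Q₀ x)
    (hker : ∀ r : Plane → ℝ, ContDiff ℝ 2 r → Integrable (fun x => r x ^ 2) →
      Integrable (fun x => gradNormSq r x) →
      (∀ x, lap r x - r x + 3 * Q₀ x ^ 2 * r x = 0) →
      ∃ c₁ c₂ : ℝ, r = fun x =>
        c₁ * fderiv ℝ (⇑Q₀) x (coordDir 0) + c₂ * fderiv ℝ (⇑Q₀) x (coordDir 1))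
    (hLminus : ∀ h : Plane → ℝ, IsH1 h →
      0 ≤ ∫ x, (gradNormSq h x + h x ^ 2 - Q₀ x ^ 2 * h x ^ 2))
    (N : ℕ) (hN : 2 ≤ N)
    (r : Fin N → Plane → ℝ)
    (hr2 : ∀ j, ContDiff ℝ 2 (r j))
    (hri : ∀ j, Integrable (fun x => r j x ^ 2))
    (hrgi : ∀ j, Integrable (fun x => gradNormSq (r j) x))
    (hsys : ∀ j x, lap (r j) x - r j x + (2 * (N : ℝ) + 1) * groundQ Q₀ N x ^ 2 * r j x
        + 4 * groundQ Q₀ N x ^ 2 * ∑ k ∈ Finset.univ.filter (fun k => k ≠ j), r k x = 0) :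
    (∀ j k, r j = r k) ∧
      ∃ c₁ c₂ : ℝ, ∀ j, r j = fun x =>
        c₁ * fderiv ℝ (⇑Q₀) x (coordDir 0) + c₂ * fderiv ℝ (⇑Q₀) x (coordDir 1) := by
  have hN' : (0 : ℝ) < 2 * N - 1 := by
    have : (2 : ℝ) ≤ N := by exact_mod_cast hN
    linarith
  simp_rw [groundQ_sq Q₀ (one_le_two.trans hN), sum_filter_ne_eq_sub] at hsys
  obtain ⟨C, -, hC⟩ := Q₀.decay 0 0
  -- the coupling cancels in differences, leaving the coefficient `(2N - 3)/(2N - 1) < 1`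
  have hdiff : ∀ j k, r j = r k := fun j k => sub_eq_zero.1 <|
    eq_zero_of_lap_sub_add_mul_sq_eq_zero Q₀.continuous (fun x => by simpa using hC x)
      (fun x => (hQpos x).ne') hLminus ((div_lt_one hN').2 (by linarith : 2 * (N : ℝ) - 3 < _))
      ((hr2 j).sub (hr2 k))
      (integrable_sq_sub (hr2 j).continuous.aestronglyMeasurable
        (hr2 k).continuous.aestronglyMeasurable (hri j) (hri k))
      (integrable_gradNormSq_sub ((hr2 j).of_le one_le_two) ((hr2 k).of_le one_le_two)
        (hrgi j) (hrgi k))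
      fun x => by
        rw [lap_sub (hr2 j) (hr2 k), Pi.sub_apply]
        linear_combination hsys j x - hsys k x
  let j₀ : Fin N := ⟨0, by omega⟩
  obtain ⟨c₁, c₂, hr₀⟩ := hker (r j₀) (hr2 j₀) (hri j₀) (hrgi j₀) fun x => by
    have hsum : ∑ k, r k x = N * r j₀ x := by simp [hdiff _ j₀]
    have hcancel : (2 * (N : ℝ) - 1) * (2 * (N : ℝ) - 1)⁻¹ = 1 := mul_inv_cancel₀ hN'.ne'
    linear_combination hsys j₀ x - 4 * (Q₀ x ^ 2 / (2 * N - 1)) * hsum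
      - 3 * Q₀ x ^ 2 * r j₀ x * hcancel
  exact ⟨hdiff, c₁, c₂, fun j => (hdiff j j₀).trans hr₀⟩

/-- Null space of the linearized operator `L₊` for the `N`-coupled
system (Lemma 3.4). -/
theorem Lplus_kernel
    (Q₀ : SchwartzMap Plane ℝ)
    (hQpos : ∀ x, 0 < Q₀ x)
    (hQrad : ∀ x y : Plane, ‖x‖ = ‖y‖ → Q₀ x = Q₀ y)
    (hQeq : ∀ x, lap (⇑Q₀) x - Q₀ x + Q₀ x ^ 3 = 0)
    (hker : ∀ r : Plane → ℝ, ContDiff ℝ 2 r → Integrable (fun x => r x ^ 2) →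
      Integrable (fun x => gradNormSq r x) →
      (∀ x, lap r x - r x + 3 * Q₀ x ^ 2 * r x = 0) →
      ∃ c₁ c₂ : ℝ, r = fun x =>
        c₁ * fderiv ℝ (⇑Q₀) x (coordDir 0) + c₂ * fderiv ℝ (⇑Q₀) x (coordDir 1))
    (hLminus : ∀ h : Plane → ℝ, IsH1 h →
      0 ≤ ∫ x, (gradNormSq h x + h x ^ 2 - Q₀ x ^ 2 * h x ^ 2))
    (N : ℕ) (hN : 2 ≤ N)
    (r : Fin N → Plane → ℝ)
    (hr2 : ∀ j, ContDiff ℝ 2 (r j))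
    (hri : ∀ j, Integrable (fun x => r j x ^ 2))
    (hrgi : ∀ j, Integrable (fun x => gradNormSq (r j) x))
    (hsys : ∀ j x, lap (r j) x - r j x + (2 * (N : ℝ) + 1) * groundQ Q₀ N x ^ 2 * r j x
        + 4 * groundQ Q₀ N x ^ 2 * ∑ k ∈ Finset.univ.filter (fun k => k ≠ j), r k x = 0) :
    (∀ j k, r j = r k) ∧
      ∃ c₁ c₂ : ℝ, ∀ j, r j = fun x =>
        c₁ * fderiv ℝ (⇑Q₀) x (coordDir 0) + c₂ * fderiv ℝ (⇑Q₀) x (coordDir 1) :=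
  Lplus_kernel_general Q₀ hQpos hker hLminus N hN r hr2 hri hrgi hsys
end
end

section
/- Vanishing of correlations under extreme rescaling (claims (2.10)–(2.11) in the proof of Lemma 2.1): let u, Q ∈ L²(ℝ²,ℂ). Then sup_{x̃,ξ∈ℝ²} | ∫_{ℝ²} u(x) e^{ix·ξ} λ^{−1} conj(Q(λ^{−1}x + x̃)) dx | → 0 as λ → ∞, and the same supremum tends to 0 as λ → 0⁺. -/
/-!
Up to an error `ε`, uniform in `λ, x̃, ξ`, both `u` and `Q` may be replaced by continuous compactly
supported functions: the correlation is sesquilinear in `(u, Q)` and, by Cauchy–Schwarz, bounded by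
`‖u‖₂ ‖Q‖₂`, because `x ↦ λ⁻¹ Q(λ⁻¹ x + x̃)` has the same `L²(ℝ²)` norm as `Q`. For bounded
integrable `u`, `Q` the integral of the modulus of the integrand is at most `λ⁻¹ ‖Q‖∞ ‖u‖₁`, and,
after the change of variables `y = λ⁻¹ x + x̃`, at most `λ ‖u‖∞ ‖Q‖₁`. Hence the supremum is
`ε + O(min(λ, λ⁻¹))` for every `ε > 0`.
-/

open MeasureTheory Filter

noncomputable section

open Topology

section AffineRescaling

variable {E F : Type*} [NormedAddCommGroup E] [NormedSpace ℝ E] [MeasurableSpace E]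
  [BorelSpace E] [FiniteDimensional ℝ E] {μ : Measure E} [μ.IsAddHaarMeasure]
  [NormedAddCommGroup F]

theorem MeasureTheory.MemLp.comp_smul_add {p : ENNReal} {f : E → F} (hf : MemLp f p μ) {c : ℝ}
    (hc : c ≠ 0) (t : E) : MemLp (fun x => f (c • x + t)) p μ := by
  have hshift : MemLp (fun y => f (y + t)) p μ :=
    hf.comp_measurePreserving (measurePreserving_add_right μ t)
  refine MemLp.comp_of_map (f := fun x => c • x) (g := fun y => f (y + t)) ?_
    (measurable_const_smul c).aemeasurable
  rw [Measure.map_addHaar_smul μ hc]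
  exact hshift.smul_measure ENNReal.ofReal_ne_top

theorem integral_comp_inv_smul_add_of_nonneg [NormedSpace ℝ F] (f : E → F) {R : ℝ} (hR : 0 ≤ R)
    (t : E) : ∫ x, f (R⁻¹ • x + t) ∂μ = R ^ Module.finrank ℝ E • ∫ x, f x ∂μ := by
  rw [Measure.integral_comp_inv_smul_of_nonneg μ (fun y => f (y + t)) hR,
    integral_add_right_eq_self]

end AffineRescaling

lemma MeasureTheory.MemLp.toReal_eLpNorm_two {α E : Type*} [MeasurableSpace α] {μ : Measure α}
    [NormedAddCommGroup E] {f : α → E} (hf : MemLp f 2 μ) :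
    (eLpNorm f 2 μ).toReal = (∫ x, ‖f x‖ ^ (2 : ℝ) ∂μ) ^ (1 / 2 : ℝ) := by
  rw [hf.eLpNorm_eq_integral_rpow_norm two_ne_zero ENNReal.ofNat_ne_top,
    ENNReal.toReal_ofReal (by positivity)]
  norm_num

lemma norm_mexp (t : ℝ) : ‖mexp t‖ = 1 := by
  simp [mexp]

def corr (lam : ℝ) (a b : Plane → ℂ) (xt xi : Plane) : ℂ :=
  ∫ x : Plane, a x * mexp (inner ℝ x xi) * ((lam⁻¹ : ℝ) : ℂ) *
    (starRingEnd ℂ) (b (lam⁻¹ • x + xt))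

section Correlation

variable {lam : ℝ} {a a' b b' u Q : Plane → ℂ}

lemma norm_corr_integrand (a b : Plane → ℂ) (hlam : 0 ≤ lam) (xt xi x : Plane) :
    ‖a x * mexp (inner ℝ x xi) * ((lam⁻¹ : ℝ) : ℂ) * (starRingEnd ℂ) (b (lam⁻¹ • x + xt))‖
      = ‖a x‖ * (lam⁻¹ * ‖b (lam⁻¹ • x + xt)‖) := by
  rw [norm_mul, norm_mul, norm_mul, norm_mexp, Complex.norm_conj, Complex.norm_real,
    Real.norm_of_nonneg (inv_nonneg.2 hlam)]
  ring

lemma integrable_corr_integrand (hlam : lam ≠ 0) (ha : MemLp a 2 volume) (hb : MemLp b 2 volume)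
    (xt xi : Plane) :
    Integrable (fun x : Plane => a x * mexp (inner ℝ x xi) * ((lam⁻¹ : ℝ) : ℂ) *
      (starRingEnd ℂ) (b (lam⁻¹ • x + xt))) volume := by
  have hab : Integrable (fun x => a x * (starRingEnd ℂ) (b (lam⁻¹ • x + xt))) volume :=
    ha.integrable_mul ((hb.comp_smul_add (inv_ne_zero hlam) xt).star)
  have hmod : Continuous fun x : Plane => mexp (inner ℝ x xi) * ((lam⁻¹ : ℝ) : ℂ) := by
    unfold mexp; fun_prop
  refine (hab.bdd_mul (c := |lam⁻¹|) hmod.aestronglyMeasurable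
    (Eventually.of_forall fun x => ?_)).congr (Eventually.of_forall fun x => ?_)
  · simp [norm_mexp]
  · simp only; ring

lemma corr_sub_left (hlam : lam ≠ 0) (ha : MemLp a 2 volume) (ha' : MemLp a' 2 volume)
    (hb : MemLp b 2 volume) {xt xi : Plane} :
    corr lam (a - a') b xt xi = corr lam a b xt xi - corr lam a' b xt xi := by
  rw [corr, corr, corr, ← integral_sub (integrable_corr_integrand hlam ha hb xt xi)
    (integrable_corr_integrand hlam ha' hb xt xi)]
  simp only [Pi.sub_apply]
  congr 1 with x
  ring

lemma corr_sub_right (hlam : lam ≠ 0) (ha : MemLp a 2 volume) (hb : MemLp b 2 volume)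
    (hb' : MemLp b' 2 volume) {xt xi : Plane} :
    corr lam a (b - b') xt xi = corr lam a b xt xi - corr lam a b' xt xi := by
  rw [corr, corr, corr, ← integral_sub (integrable_corr_integrand hlam ha hb xt xi)
    (integrable_corr_integrand hlam ha hb' xt xi)]
  simp only [Pi.sub_apply, map_sub]
  congr 1 with x
  ring

lemma integral_norm_rescale_rpow (hlam : 0 < lam) (b : Plane → ℂ) (xt : Plane) :
    ∫ x : Plane, (lam⁻¹ * ‖b (lam⁻¹ • x + xt)‖) ^ (2 : ℝ) = ∫ x : Plane, ‖b x‖ ^ (2 : ℝ) := by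
  simp_rw [Real.mul_rpow (inv_nonneg.2 hlam.le) (norm_nonneg _)]
  rw [integral_const_mul, integral_comp_inv_smul_add_of_nonneg (fun y => ‖b y‖ ^ (2 : ℝ)) hlam.le,
    finrank_euclideanSpace_fin, smul_eq_mul, ← mul_assoc, Real.rpow_two, ← mul_pow,
    inv_mul_cancel₀ hlam.ne', one_pow, one_mul]

lemma norm_corr_le_eLpNorm_mul (hlam : 0 < lam) (ha : MemLp a 2 volume) (hb : MemLp b 2 volume)
    (xt xi : Plane) :
    ‖corr lam a b xt xi‖ ≤ (eLpNorm a 2 volume).toReal * (eLpNorm b 2 volume).toReal := by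
  have hb' : MemLp (fun x => lam⁻¹ * ‖b (lam⁻¹ • x + xt)‖) (ENNReal.ofReal 2) volume := by
    simpa using (hb.comp_smul_add (inv_ne_zero hlam.ne') xt).norm.const_mul lam⁻¹
  calc ‖corr lam a b xt xi‖
      ≤ ∫ x, ‖a x‖ * (lam⁻¹ * ‖b (lam⁻¹ • x + xt)‖) :=
        (norm_integral_le_integral_norm _).trans_eq
          (integral_congr_ae (Eventually.of_forall (norm_corr_integrand a b hlam.le xt xi)))
    _ ≤ (∫ x, ‖a x‖ ^ (2 : ℝ)) ^ (1 / 2 : ℝ) *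
          (∫ x, (lam⁻¹ * ‖b (lam⁻¹ • x + xt)‖) ^ (2 : ℝ)) ^ (1 / 2 : ℝ) :=
        integral_mul_le_Lp_mul_Lq_of_nonneg Real.HolderConjugate.two_two
          (Eventually.of_forall fun x => norm_nonneg _)
          (Eventually.of_forall fun x => by positivity) (by simpa using ha.norm) hb'
    _ = (eLpNorm a 2 volume).toReal * (eLpNorm b 2 volume).toReal := by
        rw [integral_norm_rescale_rpow hlam, ha.toReal_eLpNorm_two, hb.toReal_eLpNorm_two]

lemma norm_corr_le_inv_mul (hlam : 0 < lam) (ha : Integrable a) {Cb : ℝ}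
    (hb : ∀ x, ‖b x‖ ≤ Cb) (xt xi : Plane) :
    ‖corr lam a b xt xi‖ ≤ lam⁻¹ * Cb * ∫ x, ‖a x‖ := by
  rw [← integral_const_mul]
  refine norm_integral_le_of_norm_le (ha.norm.const_mul _) (Eventually.of_forall fun x => ?_)
  rw [norm_corr_integrand a b hlam.le]
  have hb_le := hb (lam⁻¹ • x + xt)
  have hlam_inv := inv_nonneg.2 hlam.le
  calc ‖a x‖ * (lam⁻¹ * ‖b (lam⁻¹ • x + xt)‖) ≤ ‖a x‖ * (lam⁻¹ * Cb) := by gcongr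
    _ = _ := by ring

lemma norm_corr_le_mul (hlam : 0 < lam) {Ca : ℝ} (ha : ∀ x, ‖a x‖ ≤ Ca) (hb : Integrable b)
    (xt xi : Plane) :
    ‖corr lam a b xt xi‖ ≤ lam * Ca * ∫ x, ‖b x‖ := by
  have hbT : Integrable (fun x => ‖b (lam⁻¹ • x + xt)‖) :=
    memLp_one_iff_integrable.1
      ((memLp_one_iff_integrable.2 hb).comp_smul_add (inv_ne_zero hlam.ne') xt).norm
  calc ‖corr lam a b xt xi‖ ≤ ∫ x, lam⁻¹ * Ca * ‖b (lam⁻¹ • x + xt)‖ := by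
        refine norm_integral_le_of_norm_le (hbT.const_mul _) (Eventually.of_forall fun x => ?_)
        rw [norm_corr_integrand a b hlam.le]
        have ha_le := ha x
        have hlam_inv := inv_nonneg.2 hlam.le
        calc ‖a x‖ * (lam⁻¹ * ‖b (lam⁻¹ • x + xt)‖) ≤ Ca * (lam⁻¹ * ‖b (lam⁻¹ • x + xt)‖) := by
              gcongr
          _ = _ := by ring
    _ = lam * Ca * ∫ x, ‖b x‖ := by
        rw [integral_const_mul, integral_comp_inv_smul_add_of_nonneg (fun y => ‖b y‖) hlam.le,
          finrank_euclideanSpace_fin, smul_eq_mul]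
        field_simp

lemma exists_norm_corr_le_mul_min (ha : Continuous a) (ha_supp : HasCompactSupport a)
    (hb : Continuous b) (hb_supp : HasCompactSupport b) :
    ∃ C, ∀ lam > 0, ∀ xt xi, ‖corr lam a b xt xi‖ ≤ C * min lam lam⁻¹ := by
  obtain ⟨Ca, hCa⟩ := ha_supp.exists_bound_of_continuous ha
  obtain ⟨Cb, hCb⟩ := hb_supp.exists_bound_of_continuous hb
  have hCa_nonneg : 0 ≤ Ca := (norm_nonneg _).trans (hCa 0)
  have hCb_nonneg : 0 ≤ Cb := (norm_nonneg _).trans (hCb 0)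
  set A := ∫ x, ‖a x‖
  set B := ∫ x, ‖b x‖
  have hA : 0 ≤ A := integral_nonneg fun _ => norm_nonneg _
  have hB : 0 ≤ B := integral_nonneg fun _ => norm_nonneg _
  refine ⟨max (Cb * A) (Ca * B), fun lam hlam xt xi => ?_⟩
  rw [mul_min_of_nonneg _ _ (le_max_of_le_left (by positivity))]
  refine le_min ?_ ?_
  · calc ‖corr lam a b xt xi‖ ≤ lam * Ca * B :=
          norm_corr_le_mul hlam hCa (hb.integrable_of_hasCompactSupport hb_supp) xt xi
      _ ≤ max (Cb * A) (Ca * B) * lam := by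
          rw [mul_assoc, mul_comm]; gcongr; exact le_max_right _ _
  · calc ‖corr lam a b xt xi‖ ≤ lam⁻¹ * Cb * A :=
          norm_corr_le_inv_mul hlam (ha.integrable_of_hasCompactSupport ha_supp) hCb xt xi
      _ ≤ max (Cb * A) (Ca * B) * lam⁻¹ := by
          rw [mul_assoc, mul_comm]; gcongr; exact le_max_left _ _

lemma exists_norm_corr_le_add_compactSupport (hu : MemLp u 2 volume) (hQ : MemLp Q 2 volume)
    {ε : ℝ} (hε : 0 < ε) :
    ∃ u' Q' : Plane → ℂ, Continuous u' ∧ HasCompactSupport u' ∧ Continuous Q' ∧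
      HasCompactSupport Q' ∧
      ∀ lam > 0, ∀ xt xi, ‖corr lam u Q xt xi‖ ≤ ε + ‖corr lam u' Q' xt xi‖ := by
  have approx {f : Plane → ℂ} (hf : MemLp f 2 volume) {δ : ℝ} (hδ : 0 < δ) :
      ∃ g, Continuous g ∧ HasCompactSupport g ∧ MemLp g 2 volume ∧
        (eLpNorm (f - g) 2 volume).toReal ≤ δ := by
    obtain ⟨g, hg_supp, hg_close, hg_cont, hg_mem⟩ :=
      hf.exists_hasCompactSupport_eLpNorm_sub_le ENNReal.ofNat_ne_top
        (ENNReal.ofReal_pos.2 hδ).ne'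
    exact ⟨g, hg_cont, hg_supp, hg_mem, ENNReal.toReal_le_of_le_ofReal hδ.le hg_close⟩
  have small {n : ℝ} (hn : 0 ≤ n) : ε / 2 / (n + 1) * n ≤ ε / 2 := by
    rw [div_mul_eq_mul_div, div_le_iff₀ (by positivity)]
    nlinarith
  set N : (Plane → ℂ) → ℝ := fun f => (eLpNorm f 2 volume).toReal
  have hN (f : Plane → ℂ) : 0 ≤ N f := ENNReal.toReal_nonneg
  obtain ⟨u', hu'_cont, hu'_supp, hu', hu'_close⟩ :=
    approx hu (δ := ε / 2 / (N Q + 1)) (by have := hN Q; positivity)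
  obtain ⟨Q', hQ'_cont, hQ'_supp, hQ', hQ'_close⟩ :=
    approx hQ (δ := ε / 2 / (N u' + 1)) (by have := hN u'; positivity)
  refine ⟨u', Q', hu'_cont, hu'_supp, hQ'_cont, hQ'_supp, fun lam hlam xt xi => ?_⟩
  have hsplit : corr lam u Q xt xi =
      corr lam (u - u') Q xt xi + corr lam u' (Q - Q') xt xi + corr lam u' Q' xt xi := by
    rw [corr_sub_left hlam.ne' hu hu' hQ, corr_sub_right hlam.ne' hu' hQ hQ']
    ring
  calc ‖corr lam u Q xt xi‖
      ≤ ‖corr lam (u - u') Q xt xi‖ + ‖corr lam u' (Q - Q') xt xi‖ + ‖corr lam u' Q' xt xi‖ :=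
        hsplit ▸ norm_add₃_le
    _ ≤ N (u - u') * N Q + N u' * N (Q - Q') + ‖corr lam u' Q' xt xi‖ := by
        gcongr
        · exact norm_corr_le_eLpNorm_mul hlam (hu.sub hu') hQ xt xi
        · exact norm_corr_le_eLpNorm_mul hlam hu' (hQ.sub hQ') xt xi
    _ ≤ ε / 2 / (N Q + 1) * N Q + N u' * (ε / 2 / (N u' + 1)) + ‖corr lam u' Q' xt xi‖ := by
        gcongr
    _ ≤ ε + ‖corr lam u' Q' xt xi‖ := by
        have hu_err := small (hN Q)
        have hQ_err := small (hN u')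
        linarith

end Correlation

theorem tendsto_zero_of_forall_le_add_mul {α : Type*} {l : Filter α} {f g : α → ℝ}
    (hf : ∀ x, 0 ≤ f x) (hg : Tendsto g l (𝓝 0))
    (h : ∀ ε > 0, ∃ C, ∀ᶠ x in l, f x ≤ ε + C * g x) : Tendsto f l (𝓝 0) := by
  refine tendsto_order.2 ⟨fun a ha => Eventually.of_forall fun x => ha.trans_le (hf x),
    fun a ha => ?_⟩
  obtain ⟨C, hC⟩ := h (a / 2) (half_pos ha)
  have hCg : ∀ᶠ x in l, C * g x < a / 2 := by
    simpa using (hg.const_mul C).eventually (gt_mem_nhds (by simpa using half_pos ha))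
  filter_upwards [hC, hCg] with x hle hlt
  linarith

lemma tendsto_min_self_inv_atTop : Tendsto (fun t : ℝ => min t t⁻¹) atTop (𝓝 0) :=
  tendsto_of_tendsto_of_tendsto_of_le_of_le' tendsto_const_nhds tendsto_inv_atTop_zero
    ((eventually_gt_atTop 0).mono fun _ ht => le_min ht.le (inv_pos.2 ht).le)
    (Eventually.of_forall fun _ => min_le_right _ _)

lemma tendsto_min_self_inv_nhdsGT : Tendsto (fun t : ℝ => min t t⁻¹) (𝓝[>] 0) (𝓝 0) :=
  tendsto_of_tendsto_of_tendsto_of_le_of_le' tendsto_const_nhds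
    (tendsto_nhdsWithin_of_tendsto_nhds tendsto_id)
    (eventually_mem_nhdsWithin.mono fun _ (ht : 0 < _) => le_min ht.le (inv_pos.2 ht).le)
    (Eventually.of_forall fun _ => min_le_left _ _)

def corrSup (u Q : Plane → ℂ) (lam : ℝ) : ℝ := ⨆ xt : Plane, ⨆ xi : Plane, ‖corr lam u Q xt xi‖

lemma corrSup_nonneg (u Q : Plane → ℂ) (lam : ℝ) : 0 ≤ corrSup u Q lam :=
  Real.iSup_nonneg fun _ => Real.iSup_nonneg fun _ => norm_nonneg _

lemma exists_corrSup_le_add_mul_min {u Q : Plane → ℂ} (hu : MemLp u 2 volume)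
    (hQ : MemLp Q 2 volume) {ε : ℝ} (hε : 0 < ε) :
    ∃ C, ∀ lam > 0, corrSup u Q lam ≤ ε + C * min lam lam⁻¹ := by
  obtain ⟨u', Q', hu'_cont, hu'_supp, hQ'_cont, hQ'_supp, happrox⟩ :=
    exists_norm_corr_le_add_compactSupport hu hQ hε
  obtain ⟨C, hC⟩ := exists_norm_corr_le_mul_min hu'_cont hu'_supp hQ'_cont hQ'_supp
  exact ⟨C, fun lam hlam => ciSup_le fun xt => ciSup_le fun xi =>
    (happrox lam hlam xt xi).trans (add_le_add_right (hC lam hlam xt xi) ε)⟩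

/-- Vanishing of correlations under extreme rescaling
(claims (2.10)–(2.11) in the proof of Lemma 2.1). -/
theorem correlation_vanishing_extreme_scaling
    (u Q : Plane → ℂ) (hu : MemLp u 2 volume) (hQ : MemLp Q 2 volume) :
    Tendsto (fun lam : ℝ => ⨆ xt : Plane, ⨆ xi : Plane,
        ‖∫ x : Plane, u x * mexp (inner ℝ x xi) * ((lam⁻¹ : ℝ) : ℂ) *
            (starRingEnd ℂ) (Q (lam⁻¹ • x + xt))‖)
      atTop (nhds 0) ∧
    Tendsto (fun lam : ℝ => ⨆ xt : Plane, ⨆ xi : Plane,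
        ‖∫ x : Plane, u x * mexp (inner ℝ x xi) * ((lam⁻¹ : ℝ) : ℂ) *
            (starRingEnd ℂ) (Q (lam⁻¹ • x + xt))‖)
      (nhdsWithin 0 (Set.Ioi 0)) (nhds 0) := by
  have vanishing {l : Filter ℝ} (hpos : ∀ᶠ lam in l, 0 < lam)
      (hmin : Tendsto (fun lam => min lam lam⁻¹) l (𝓝 0)) : Tendsto (corrSup u Q) l (𝓝 0) :=
    tendsto_zero_of_forall_le_add_mul (corrSup_nonneg u Q) hmin fun ε hε =>
      let ⟨C, hC⟩ := exists_corrSup_le_add_mul_min hu hQ hε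
      ⟨C, hpos.mono hC⟩
  exact ⟨vanishing (eventually_gt_atTop 0) tendsto_min_self_inv_atTop,
    vanishing self_mem_nhdsWithin tendsto_min_self_inv_nhdsGT⟩
end
end

section
/- Square-function representation of the resonant nonlinearity: for every finitely supported a : ℤ → ℂ, ∑_{j∈ℤ} ( ∑_{(j₁,j₂,j₃)∈R(j)} a_{j₁}·conj(a_{j₂})·a_{j₃} )·conj(a_j) = ∑_{j∈ℤ}∑_{n∈ℤ} | ∑_{(j₁,j₂)∈ℤ² : j₁−j₂=j, j₁²−j₂²=n} a_{j₁}·conj(a_{j₂}) |²; in particular the left-hand side is a nonnegative real number. -/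
/-! Put `G (j₁, j₂) = a j₁ · conj (a j₂)` and `diffSq (j₁, j₂) = (j₁ − j₂, j₁² − j₂²)`. A triple
lies in `R(j)` iff `diffSq (j₁, j₂) = diffSq (j, j₃)`, so the left side is the coincidence sum
`∑_{diffSq p = diffSq r} G p · conj (G r)`. Splitting it according to the common value `q` of
`diffSq` gives `∑_q |∑_{diffSq p = q} G p|²`. -/

open Function ComplexConjugate

section CoincidenceSum

variable {α β 𝕜 : Type*} [RCLike 𝕜] [DecidableEq β] {G : α → 𝕜}

theorem summable_coincidence (hG : G.HasFiniteSupport) (φ : α → β) :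
    Summable fun x : α × α => if φ x.1 = φ x.2 then G x.1 * conj (G x.2) else 0 := by
  refine summable_of_hasFiniteSupport ((hG.prod hG).subset fun x hx => ?_)
  simp only [mem_support, ne_eq, ite_eq_right_iff, not_forall, mul_eq_zero, map_eq_zero,
    not_or] at hx
  exact ⟨hx.2.1, hx.2.2⟩

theorem tsum_norm_sq_fiber_sum (φ : α → β) (hG : G.HasFiniteSupport) :
    ((∑' q, ‖∑' p, if φ p = q then G p else 0‖ ^ 2 : ℝ) : 𝕜) =
      ∑' x : α × α, if φ x.1 = φ x.2 then G x.1 * conj (G x.2) else 0 := by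
  set F : β → 𝕜 := fun q => ∑' p, if φ p = q then G p else 0
  have hfib : Summable (uncurry fun p q => if φ p = q then G p * conj (F q) else 0) := by
    refine summable_of_hasFiniteSupport ((hG.image fun p => (p, φ p)).subset fun x hx => ?_)
    simp only [mem_support, ne_eq, ite_eq_right_iff, not_forall, mul_eq_zero, not_or,
      uncurry] at hx
    exact ⟨x.1, hx.2.1, Prod.ext rfl hx.1⟩
  calc ((∑' q, ‖F q‖ ^ 2 : ℝ) : 𝕜)
      = ∑' q, ∑' p, if φ p = q then G p * conj (F q) else 0 := by
        simp_rw [RCLike.ofReal_tsum, RCLike.ofReal_pow, ← RCLike.mul_conj, F, ← tsum_mul_right,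
          ite_mul, zero_mul]
    _ = ∑' p, G p * conj (F (φ p)) := by
        rw [hfib.tsum_comm]
        simp_rw [tsum_ite_eq']
    _ = ∑' p, ∑' r, if φ p = φ r then G p * conj (G r) else 0 := by
        simp_rw [F, RCLike.conj_tsum, ← tsum_mul_left, apply_ite conj, map_zero, mul_ite,
          mul_zero, eq_comm]
    _ = _ := ((summable_coincidence hG φ).tsum_prod).symm

end CoincidenceSum

section Resonance

variable {R : Type*} [CommRing R]

def diffSq (p : R × R) : R × R := (p.1 - p.2, p.1 ^ 2 - p.2 ^ 2)

theorem diffSq_eq_iff (p q : R × R) :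
    diffSq p = q ↔ p.1 - p.2 = q.1 ∧ p.1 ^ 2 - p.2 ^ 2 = q.2 :=
  Prod.ext_iff

theorem resonance_iff_diffSq_eq (j j₁ j₂ j₃ : R) :
    (j₁ - j₂ + j₃ = j ∧ j₁ ^ 2 - j₂ ^ 2 + j₃ ^ 2 = j ^ 2) ↔ diffSq (j₁, j₂) = diffSq (j, j₃) := by
  rw [diffSq, diffSq, Prod.mk.injEq]
  constructor <;> rintro ⟨h₁, h₂⟩ <;> exact ⟨by linear_combination h₁, by linear_combination h₂⟩

theorem resonant_term_eq [DecidableEq R] {𝕜 : Type*} [RCLike 𝕜] (a : R → 𝕜) (j j₁ j₂ j₃ : R) :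
    (if j₁ - j₂ + j₃ = j ∧ j₁ ^ 2 - j₂ ^ 2 + j₃ ^ 2 = j ^ 2 then a j₁ * conj (a j₂) * a j₃ else 0)
        * conj (a j) =
      if diffSq (j₁, j₂) = diffSq (j, j₃) then a j₁ * conj (a j₂) * conj (a j * conj (a j₃))
      else 0 := by
  simp_rw [resonance_iff_diffSq_eq, ite_mul, zero_mul, map_mul, RCLike.conj_conj]
  congr 1
  ring

end Resonance

/-- Square-function representation of the resonant nonlinearity. -/
theorem resonance_square_function
    (a : ℤ → ℂ) (ha : (Function.support a).Finite) :
    (∑' j : ℤ,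
        (∑' p : ℤ × ℤ × ℤ,
            if p.1 - p.2.1 + p.2.2 = j ∧ p.1 ^ 2 - p.2.1 ^ 2 + p.2.2 ^ 2 = j ^ 2
            then a p.1 * (starRingEnd ℂ) (a p.2.1) * a p.2.2 else 0)
          * (starRingEnd ℂ) (a j))
      = ((∑' q : ℤ × ℤ,
          ‖∑' p : ℤ × ℤ, if p.1 - p.2 = q.1 ∧ p.1 ^ 2 - p.2 ^ 2 = q.2
              then a p.1 * (starRingEnd ℂ) (a p.2) else 0‖ ^ 2 : ℝ) : ℂ) ∧
    0 ≤ (∑' q : ℤ × ℤ,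
          ‖∑' p : ℤ × ℤ, if p.1 - p.2 = q.1 ∧ p.1 ^ 2 - p.2 ^ 2 = q.2
              then a p.1 * (starRingEnd ℂ) (a p.2) else 0‖ ^ 2 : ℝ) := by
  refine ⟨?_, tsum_nonneg fun _ => by positivity⟩
  let G : ℤ × ℤ → ℂ := fun p => a p.1 * conj (a p.2)
  have hG : G.HasFiniteSupport := (ha.prod ha).subset fun p hp => by
    simp_all [G, Set.mem_prod]
  let e : ℤ × ℤ × ℤ × ℤ ≃ (ℤ × ℤ) × (ℤ × ℤ) :=
    ⟨fun x => ((x.2.1, x.2.2.1), (x.1, x.2.2.2)), fun y => (y.2.1, y.1.1, y.1.2, y.2.2),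
      fun _ => rfl, fun _ => rfl⟩
  let coincidence : (ℤ × ℤ) × (ℤ × ℤ) → ℂ :=
    fun y => if diffSq y.1 = diffSq y.2 then G y.1 * conj (G y.2) else 0
  have hsum : Summable (coincidence ∘ e) := e.summable_iff.mpr (summable_coincidence hG diffSq)
  simp_rw [← diffSq_eq_iff]
  calc _ = ∑' j, ∑' t : ℤ × ℤ × ℤ, coincidence (e (j, t)) := by
        simp_rw [← tsum_mul_right, resonant_term_eq]; rfl
    _ = ∑' x, coincidence (e x) := hsum.tsum_prod.symm
    _ = ∑' y, coincidence y := e.tsum_eq coincidence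
    _ = _ := (tsum_norm_sq_fiber_sum diffSq hG).symm
end
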